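/- arXiv:2304.01135 — 5 statements merged into one kernel-verified Lean document; each statement's English description precedes it below -/
import Mathlib

section
/- Let A be a commutative Noetherian ring, I ⊆ A an ideal, and E, F finitely generated A-modules. For an A-module M and n ≥ 0 write M_n = M/I^{n+1}M. Then for every e ≥ 0 there exists k_e ≥ e such that for every k ≥ k_e, the map Hom_A(E,F)_e → Hom_A(E_k, F_k)_e induced by the restriction map Hom_A(E,F) → Hom_A(E_k, F_k) (sending an A-linear homomorphism h : E → F to the induced homomorphism E/I^{k+1}E → F/I^{k+1}F) is injective. -/
/-!
Choose a presentation `P₀ → P₁ → E → 0` by finite free modules. Left exactness of `Hom(-, F)`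
identifies `Hom(E, F)` with the kernel of `ρ : Hom(P₁, F) → Hom(P₀, F)`, and since `P₁`, `P₀` are
free, `Hom(P, F) ⧸ J • Hom(P, F) = Hom(P, F ⧸ J • F)`. So a map `E_k → F_k` lifts to some
`ψ : P₁ → F` with `ρ ψ ∈ I^{k+1} Hom(P₀, F)`, and Artin–Rees for the image of `ρ` puts `ψ` in
`ker ρ + I^{k+1-c} Hom(P₁, F)`. Consequently, if `h : E → F` becomes divisible by `I^{e+1}`
modulo `I^{k+1}`, its image in `Hom(P₁, F)` lies in `I^{e+1} ker ρ + I^{k+1-c} Hom(P₁, F)`, and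
Artin–Rees for `ker ρ ⊆ Hom(P₁, F)` absorbs the second summand once `k` is large.
-/

theorem smul_top_le_comap_smul_top {A : Type*} [CommRing A] (J : Ideal A)
    {E F : Type*} [AddCommGroup E] [Module A E] [AddCommGroup F] [Module A F]
    (h : E →ₗ[A] F) :
    J • (⊤ : Submodule A E) ≤ (J • (⊤ : Submodule A F)).comap h :=
  Submodule.map_le_iff_le_comap.mp (by
    rw [Submodule.map_smul'']
    exact Submodule.smul_mono le_rfl le_top)

def restrictHom {A : Type*} [CommRing A] (I : Ideal A)
    (E F : Type*) [AddCommGroup E] [Module A E] [AddCommGroup F] [Module A F] (k : ℕ) :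
    (E →ₗ[A] F) →ₗ[A]
      ((E ⧸ (I ^ (k + 1) • (⊤ : Submodule A E))) →ₗ[A]
        (F ⧸ (I ^ (k + 1) • (⊤ : Submodule A F)))) where
  toFun h := Submodule.mapQ _ _ h (smul_top_le_comap_smul_top (I ^ (k + 1)) h)
  map_add' h g := by
    apply LinearMap.ext
    intro x
    obtain ⟨y, rfl⟩ := Submodule.Quotient.mk_surjective _ x
    simp [Submodule.mapQ_apply]
  map_smul' c h := by
    apply LinearMap.ext
    intro x
    obtain ⟨y, rfl⟩ := Submodule.Quotient.mk_surjective _ x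
    simp [Submodule.mapQ_apply]

section

variable {A M M' : Type*} [CommRing A] [AddCommGroup M] [Module A M] [AddCommGroup M'] [Module A M']

namespace Ideal

variable [IsNoetherianRing A] (I : Ideal A)

theorem exists_pow_smul_top_inf_le [Module.Finite A M] (N : Submodule A M) :
    ∃ c, ∀ n ≥ c, I ^ n • ⊤ ⊓ N ≤ I ^ (n - c) • N := by
  obtain ⟨c, hc⟩ := I.exists_pow_inf_eq_pow_smul N
  exact ⟨c, fun n hn => (hc n hn).le.trans (Submodule.smul_mono le_rfl inf_le_right)⟩

theorem exists_inf_pow_smul_sup_pow_smul_top_le [Module.Finite A M] (N : Submodule A M) (e : ℕ) :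
    ∃ c, ∀ n ≥ c, N ⊓ (I ^ e • N ⊔ I ^ n • ⊤) ≤ I ^ e • N := by
  obtain ⟨c, hc⟩ := I.exists_pow_smul_top_inf_le N
  refine ⟨c + e, fun n hn => ?_⟩
  rw [sup_comm, ← inf_sup_assoc_of_le _ Submodule.smul_le_right, inf_comm]
  refine sup_le ((hc n (by omega)).trans (Submodule.smul_mono_left ?_)) le_rfl
  exact Ideal.pow_le_pow_right (by omega)

theorem exists_comap_pow_smul_top_le [Module.Finite A M'] (f : M →ₗ[A] M') :
    ∃ c, ∀ n ≥ c, (I ^ n • ⊤ : Submodule A M').comap f ≤ LinearMap.ker f ⊔ I ^ (n - c) • ⊤ := by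
  obtain ⟨c, hc⟩ := I.exists_pow_smul_top_inf_le (LinearMap.range f)
  refine ⟨c, fun n hn x hx => ?_⟩
  have hfx : f x ∈ (I ^ (n - c) • ⊤ : Submodule A M).map f := by
    rw [Submodule.map_smul'', Submodule.map_top]
    exact hc n hn ⟨hx, LinearMap.mem_range_self f x⟩
  rw [sup_comm, ← Submodule.comap_map_eq]
  exact hfx

end Ideal

theorem LinearMap.mem_smul_top_iff_forall_apply_mem {P : Type*} [AddCommGroup P] [Module A P]
    [Module.Free A P] [Module.Finite A P] (J : Ideal A) (g : P →ₗ[A] M) :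
    g ∈ J • (⊤ : Submodule A (P →ₗ[A] M)) ↔ ∀ x, g x ∈ J • (⊤ : Submodule A M) := by
  refine ⟨fun hg x => smul_top_le_comap_smul_top J (LinearMap.applyₗ x) hg, fun hg => ?_⟩
  let b := Module.Free.chooseBasis A P
  have hsum : g = ∑ i, LinearMap.smulRightₗ (b.coord i) (g (b i)) :=
    b.ext fun j => by classical simp [Finsupp.single_apply]
  rw [hsum]
  exact Submodule.sum_mem _ fun i _ => smul_top_le_comap_smul_top J _ (hg (b i))

section Presentation

open LinearMap

variable {P₀ P₁ E F : Type*} [AddCommGroup P₀] [Module A P₀] [AddCommGroup P₁] [Module A P₁]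
  [AddCommGroup E] [Module A E] [AddCommGroup F] [Module A F]
  [Module.Free A P₀] [Module.Finite A P₀] {g : P₀ →ₗ[A] P₁} {f : P₁ →ₗ[A] E}

theorem exists_lift_comp_mem_smul_top [Module.Projective A P₁] (hfg : f ∘ₗ g = 0) (J : Ideal A)
    (φ : (E ⧸ (J • ⊤ : Submodule A E)) →ₗ[A] F ⧸ (J • ⊤ : Submodule A F)) :
    ∃ ψ : P₁ →ₗ[A] F, (J • ⊤ : Submodule A F).mkQ ∘ₗ ψ = φ ∘ₗ (J • ⊤ : Submodule A E).mkQ ∘ₗ f ∧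
      ψ ∘ₗ g ∈ J • (⊤ : Submodule A (P₀ →ₗ[A] F)) := by
  obtain ⟨ψ, hψ⟩ := Module.projective_lifting_property _ (φ ∘ₗ (J • ⊤ : Submodule A E).mkQ ∘ₗ f)
    (J • ⊤ : Submodule A F).mkQ_surjective
  refine ⟨ψ, hψ, (mem_smul_top_iff_forall_apply_mem J _).2 fun x => ?_⟩
  have hfgx : f (g x) = 0 := by rw [← comp_apply, hfg, LinearMap.zero_apply]
  simpa [hfgx, Submodule.Quotient.mk_eq_zero] using LinearMap.congr_fun hψ (g x)

theorem lcomp_mem_smul_range_sup_of_mapQ_mem [Module.Free A P₁] [Module.Finite A P₁]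
    (hfg : Function.Exact g f) (hf : Function.Surjective f) {J L : Ideal A} (hJL : J ≤ L)
    (hg : (J • ⊤ : Submodule A (P₀ →ₗ[A] F)).comap (lcomp A F g) ≤ ker (lcomp A F g) ⊔ L • ⊤)
    (K : Ideal A) {h : E →ₗ[A] F}
    (hh : Submodule.mapQ _ _ h (smul_top_le_comap_smul_top J h) ∈
      K • (⊤ : Submodule A ((E ⧸ (J • ⊤ : Submodule A E)) →ₗ[A] F ⧸ (J • ⊤ : Submodule A F)))) :
    lcomp A F f h ∈ K • range (lcomp A F f) ⊔ L • ⊤ := by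
  let τ := compRight A (J • ⊤ : Submodule A F).mkQ (M := P₁)
  let σ := lcomp A (F ⧸ (J • ⊤ : Submodule A F)) ((J • ⊤ : Submodule A E).mkQ ∘ₗ f)
  have hτ : ker τ = J • ⊤ := by
    ext ψ
    simp [τ, mem_smul_top_iff_forall_apply_mem, LinearMap.ext_iff]
  have hσ : range σ ≤ (range (lcomp A F f) ⊔ L • ⊤).map τ := by
    rintro _ ⟨φ, rfl⟩
    obtain ⟨ψ, hψ, hψg⟩ := exists_lift_comp_mem_smul_top hfg.linearMap_comp_eq_zero J φ
    rw [← (exact_lcomp_of_exact_of_surjective F hfg hf).linearMap_ker_eq]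
    exact ⟨ψ, hg hψg, hψ⟩
  have hστ : σ (Submodule.mapQ _ _ h (smul_top_le_comap_smul_top J h)) = τ (lcomp A F f h) := by
    ext x
    simp [σ, τ]
  have hmem : lcomp A F f h ∈ K • (range (lcomp A F f) ⊔ L • ⊤) ⊔ J • ⊤ := by
    rw [← hτ, ← Submodule.comap_map_eq, Submodule.map_smul'', Submodule.mem_comap, ← hστ]
    refine Submodule.smul_mono le_rfl hσ ?_
    rw [← Submodule.map_top, ← Submodule.map_smul'']
    exact Submodule.mem_map_of_mem hh
  refine (sup_le ?_ ?_ : _ ≤ K • range (lcomp A F f) ⊔ L • ⊤) hmem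
  · rw [Submodule.smul_sup]
    exact sup_le_sup_left Submodule.smul_le_right _
  · exact le_sup_of_le_right (Submodule.smul_mono_left hJL)

end Presentation

end

theorem hom_quotient_injective_of_large_k
    {A : Type*} [CommRing A] [IsNoetherianRing A] (I : Ideal A)
    (E F : Type*) [AddCommGroup E] [Module A E] [AddCommGroup F] [Module A F]
    [Module.Finite A E] [Module.Finite A F] (e : ℕ) :
    ∃ k_e : ℕ, e ≤ k_e ∧ ∀ k : ℕ, k_e ≤ k →
      Function.Injective
        (Submodule.mapQ
          (I ^ (e + 1) • (⊤ : Submodule A (E →ₗ[A] F)))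
          (I ^ (e + 1) • (⊤ : Submodule A
            ((E ⧸ (I ^ (k + 1) • (⊤ : Submodule A E))) →ₗ[A]
              (F ⧸ (I ^ (k + 1) • (⊤ : Submodule A F))))))
          (restrictHom I E F k)
          (smul_top_le_comap_smul_top (I ^ (e + 1)) (restrictHom I E F k))) := by
  have := Module.finitePresentation_of_finite A E
  obtain ⟨n, m, f, g, hf, hfg⟩ := Module.FinitePresentation.exists_fin' A E
  obtain ⟨c₁, hc₁⟩ :=
    I.exists_inf_pow_smul_sup_pow_smul_top_le (LinearMap.range (LinearMap.lcomp A F f)) (e + 1)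
  obtain ⟨c₂, hc₂⟩ := I.exists_comap_pow_smul_top_le (LinearMap.lcomp A F g)
  refine ⟨e + c₁ + c₂, by omega, fun k hk => ?_⟩
  rw [← LinearMap.ker_eq_bot, Submodule.ker_mapQ, ← LinearMap.le_ker_iff_map, Submodule.ker_mkQ]
  intro h hh
  have hlcomp := lcomp_mem_smul_range_sup_of_mapQ_mem hfg hf
    (Ideal.pow_le_pow_right (Nat.sub_le (k + 1) c₂)) (hc₂ (k + 1) (by omega)) (I ^ (e + 1)) hh
  obtain ⟨h', hh', hh'h⟩ : LinearMap.lcomp A F f h ∈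
      (I ^ (e + 1) • ⊤ : Submodule A (E →ₗ[A] F)).map (LinearMap.lcomp A F f) := by
    rw [Submodule.map_smul'', Submodule.map_top]
    exact hc₁ (k + 1 - c₂) (by omega) ⟨LinearMap.mem_range_self _ h, hlcomp⟩
  rwa [← LinearMap.lcomp_injective_of_surjective f hf hh'h]
end

section
/- Let P be an integral commutative monoid, G an abelian group, and ι : P → G an injective monoid homomorphism. Let V be a module over the monoid algebra ℂ[P] equipped with a G-grading, i.e. a family (V_g)_{g∈G} of ℂ-subspaces whose internal direct sum is all of V and such that x^p · V_g ⊆ V_{ι(p)+g} for all p ∈ P and g ∈ G. Let F ⊆ P be a face and let f ∈ F generate F as a face, i.e. for every x ∈ F there exist y ∈ F and n ∈ ℕ with x + y = n·f. Assume there exist finitely many elements f_1, …, f_s ∈ F and homogeneous elements v_i ∈ V_{−ι(f_i)} (1 ≤ i ≤ s) such that for every g lying in the subgroup of G generated by ι(F), the subspace V_g is contained in the ℂ-linear span of {x^φ · v_i : φ ∈ F, 1 ≤ i ≤ s}. Then for every n ∈ ℕ and every v ∈ V_{n·ι(f)} there exists w ∈ V_0 with v = x^{n·f} · w. In particular, if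 multiplication by x^f is injective on V, then for every n ∈ ℕ the map V_0 → V_{n·ι(f)}, w ↦ x^{n·f}·w, is bijective. -/
/-!
Project a spanning relation for `v ∈ V_{n·ι(f)}` onto degree `n·ι(f)`: a generator
`x^φ · vᵢ` has degree `ι(φ) - ι(fᵢ)`, so by injectivity of `ι` only those with `φ = n·f + fᵢ`
survive, and these are `x^{n·f} · (x^{fᵢ} · vᵢ)` with `x^{fᵢ} · vᵢ ∈ V_0`.
Uniqueness holds because multiplication by `x^{n·f}` is the `n`-th iterate of multiplication by `x^f`.
-/

open AddMonoidAlgebra DirectSum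

theorem DirectSum.mem_span_image_decompose_of_mem {ι R M : Type*} [DecidableEq ι] [Semiring R]
    [AddCommMonoid M] [Module R M] (𝓜 : ι → Submodule R M) [Decomposition 𝓜]
    {S : Set M} {v : M} {i : ι} (hvi : v ∈ 𝓜 i) (hv : v ∈ Submodule.span R S) :
    v ∈ Submodule.span R ((fun x => (decompose 𝓜 x i : M)) '' S) := by
  let π : M →ₗ[R] M :=
    (𝓜 i).subtype ∘ₗ component R ι (𝓜 ·) i ∘ₗ (decomposeLinearEquiv 𝓜).toLinearMap
  have hπv : π v = v := decompose_of_mem_same 𝓜 hvi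
  rw [show ((fun x => (decompose 𝓜 x i : M)) '' S) = π '' S from rfl, ← Submodule.map_span, ← hπv]
  exact Submodule.mem_map_of_mem hv

theorem AddMonoidAlgebra.of'_nsmul {R P : Type*} [Semiring R] [AddMonoid P] (n : ℕ) (p : P) :
    of' R P (n • p) = of' R P p ^ n := by
  simp only [of'_eq_of, ofAdd_nsmul, map_pow]

theorem AddMonoidAlgebra.of'_add {R P : Type*} [Semiring R] [AddMonoid P] (p q : P) :
    of' R P (p + q) = of' R P p * of' R P q := by
  simp only [of'_eq_of, ofAdd_add, map_mul]

theorem AddMonoidAlgebra.injective_of'_nsmul_smul {R P V : Type*} [Semiring R] [AddMonoid P]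
    [MulAction R[P] V] {p : P} (hp : Function.Injective (of' R P p • · : V → V)) (n : ℕ) :
    Function.Injective (of' R P (n • p) • · : V → V) := by
  rw [of'_nsmul, ← smul_iterate]
  exact hp.iterate n

theorem exists_mem_zero_of'_smul_eq_of_mem_span {R P G V κ : Type*} [CommSemiring R]
    [AddMonoid P] [AddCommGroup G] [DecidableEq G] [AddCommMonoid V] [Module R V] [Module R[P] V]
    [IsScalarTower R R[P] V] {ι : P →+ G} (hι : Function.Injective ι)
    (Vg : G → Submodule R V) [Decomposition Vg]
    (hgrade : ∀ (p : P) (g : G), ∀ v ∈ Vg g, of' R P p • v ∈ Vg (ι p + g))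
    {d : κ → P} {vi : κ → V} (hvi : ∀ k, vi k ∈ Vg (-ι (d k))) {p : P} {v : V}
    (hv : v ∈ Vg (ι p)) (hspan : v ∈ Submodule.span R {w | ∃ φ k, w = of' R P φ • vi k}) :
    ∃ w ∈ Vg 0, of' R P p • w = v := by
  let L : V →ₗ[R] V := DistribSMul.toLinearMap R V (of' R P p)
  suffices v ∈ (Vg 0).map L from this
  refine Submodule.span_le.2 ?_ (mem_span_image_decompose_of_mem Vg hv hspan)
  rintro _ ⟨_, ⟨φ, k, rfl⟩, rfl⟩
  have hdeg : of' R P φ • vi k ∈ Vg (ι φ + -ι (d k)) := hgrade _ _ _ (hvi k)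
  change (decompose Vg (of' R P φ • vi k) (ι p) : V) ∈ (Vg 0).map L
  by_cases hφp : ι φ + -ι (d k) = ι p
  · have hφ : φ = p + d k := hι (by rw [map_add, ← hφp]; abel)
    have hdk : of' R P (d k) • vi k ∈ Vg 0 := by simpa using hgrade (d k) _ _ (hvi k)
    rw [decompose_of_mem_same Vg (hφp ▸ hdeg), hφ, of'_add, mul_smul]
    exact Submodule.mem_map_of_mem hdk
  · rw [decompose_of_mem_ne Vg hdeg hφp]
    exact zero_mem _

theorem graded_module_degree_zero_generation_general
    (P : Type) [AddCancelCommMonoid P]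
    (G : Type) [AddCommGroup G] (ι : P →+ G) (hι_inj : Function.Injective ι)
    (V : Type) [AddCommGroup V] [Module ℂ V]
    [Module (AddMonoidAlgebra ℂ P) V] [IsScalarTower ℂ (AddMonoidAlgebra ℂ P) V]
    (Vg : G → Submodule ℂ V)
    (hindep : iSupIndep Vg)
    (hsup : (⨆ g, Vg g) = ⊤)
    (hgrade : ∀ (p : P) (g : G), ∀ v ∈ Vg g, (of' ℂ P p) • v ∈ Vg (ι p + g))
    (F : AddSubmonoid P)
    (f : P) (hfF : f ∈ F)
    (s : ℕ) (fi : Fin s → P)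
    (vi : Fin s → V) (hvi : ∀ i, vi i ∈ Vg (-(ι (fi i))))
    (hgen : ∀ g ∈ AddSubgroup.closure ((ι : P → G) '' (F : Set P)),
      (Vg g : Set V) ⊆
        ↑(Submodule.span ℂ
          {w : V | ∃ φ ∈ F, ∃ i : Fin s, w = (of' ℂ P φ) • vi i})) :
    (∀ n : ℕ, ∀ v ∈ Vg (n • ι f), ∃ w ∈ Vg 0, (of' ℂ P (n • f)) • w = v) ∧
    ((Function.Injective fun v : V => (of' ℂ P f) • v) →
      ∀ n : ℕ, ∀ v ∈ Vg (n • ι f),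
        ∃! w : V, w ∈ Vg 0 ∧ (of' ℂ P (n • f)) • w = v) := by
  classical
  let : Decomposition Vg :=
    (isInternal_submodule_of_iSupIndep_of_iSup_eq_top hindep hsup).chooseDecomposition
  have hexists (n : ℕ) (v : V) (hv : v ∈ Vg (n • ι f)) :
      ∃ w ∈ Vg 0, of' ℂ P (n • f) • w = v := by
    have hdeg : n • ι f ∈ AddSubgroup.closure ((ι : P → G) '' (F : Set P)) :=
      AddSubgroup.nsmul_mem _ (AddSubgroup.subset_closure (Set.mem_image_of_mem ι hfF)) n
    refine exists_mem_zero_of'_smul_eq_of_mem_span hι_inj Vg hgrade hvi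
      (by rwa [map_nsmul]) (Submodule.span_mono ?_ (hgen _ hdeg hv))
    rintro _ ⟨φ, -, i, rfl⟩
    exact ⟨φ, i, rfl⟩
  refine ⟨hexists, fun hinj n v hv => ?_⟩
  obtain ⟨w, hw0, rfl⟩ := hexists n v hv
  exact ⟨w, ⟨hw0, rfl⟩, fun w' hw' => injective_of'_nsmul_smul hinj n hw'.2⟩

theorem graded_module_degree_zero_generation
    (P : Type) [AddCancelCommMonoid P]
    (G : Type) [AddCommGroup G] (ι : P →+ G) (hι_inj : Function.Injective ι)
    (V : Type) [AddCommGroup V] [Module ℂ V]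
    [Module (AddMonoidAlgebra ℂ P) V] [IsScalarTower ℂ (AddMonoidAlgebra ℂ P) V]
    (Vg : G → Submodule ℂ V)
    (hindep : iSupIndep Vg)
    (hsup : (⨆ g, Vg g) = ⊤)
    (hgrade : ∀ (p : P) (g : G), ∀ v ∈ Vg g, (of' ℂ P p) • v ∈ Vg (ι p + g))
    (F : AddSubmonoid P) (hface : ∀ x y : P, x + y ∈ F → x ∈ F ∧ y ∈ F)
    (f : P) (hfF : f ∈ F)
    (hf_gen : ∀ x ∈ F, ∃ y ∈ F, ∃ n : ℕ, x + y = n • f)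
    (s : ℕ) (fi : Fin s → P) (hfi : ∀ i, fi i ∈ F)
    (vi : Fin s → V) (hvi : ∀ i, vi i ∈ Vg (-(ι (fi i))))
    (hgen : ∀ g ∈ AddSubgroup.closure ((ι : P → G) '' (F : Set P)),
      (Vg g : Set V) ⊆
        ↑(Submodule.span ℂ
          {w : V | ∃ φ ∈ F, ∃ i : Fin s, w = (of' ℂ P φ) • vi i})) :
    (∀ n : ℕ, ∀ v ∈ Vg (n • ι f), ∃ w ∈ Vg 0, (of' ℂ P (n • f)) • w = v) ∧
    ((Function.Injective fun v : V => (of' ℂ P f) • v) →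
      ∀ n : ℕ, ∀ v ∈ Vg (n • ι f),
        ∃! w : V, w ∈ Vg 0 ∧ (of' ℂ P (n • f)) • w = v) :=
  graded_module_degree_zero_generation_general P G ι hι_inj V Vg hindep hsup hgrade F f hfF s fi vi
    hvi hgen
end

section
/- Let P be an fs monoid, let ι : P → G be its Grothendieck group (so ι is an injective monoid homomorphism into an abelian group G such that every element of G has the form ι(a) − ι(b) with a, b ∈ P), and let F ⊆ P be a face. Then the quotient group G/⟨ι(F)⟩ of G by the subgroup generated by ι(F) is a free abelian group; consequently the quotient homomorphism G → G/⟨ι(F)⟩ admits a group-homomorphism section. In particular, taking F = P^× (the submonoid of invertible elements), the group P^gp/P^× is free abelian. -/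
/-!
Write `H` for the subgroup generated by `ι(F)`; its elements are the differences `ι a - ι b`
with `a, b ∈ F`. If `n • g = ι a - ι b`, then `n • (g + ι b) = ι (a + (n - 1) • b)` lies in the
image of `P`, so saturation gives `g + ι b = ι p`, and `n • p = a + (n - 1) • b ∈ F` forces
`p ∈ F` because `F` is a face. Hence `G ⧸ H` is torsion free; it is finitely generated because
`G` is, so it is a free `ℤ`-module, and the quotient map splits since free modules are
projective.
-/

namespace AddSubmonoid

variable {P : Type*} [AddCommMonoid P]

def IsFace (F : AddSubmonoid P) : Prop :=
  ∀ x y : P, x + y ∈ F → x ∈ F ∧ y ∈ F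

lemma IsFace.mem_of_nsmul_mem {F : AddSubmonoid P} (hF : F.IsFace) {n : ℕ} (hn : n ≠ 0) {p : P}
    (h : n • p ∈ F) : p ∈ F := by
  obtain ⟨m, rfl⟩ := Nat.exists_eq_succ_of_ne_zero hn
  rw [succ_nsmul] at h
  exact (hF _ _ h).2

variable (P) in
lemma isFace_isAddUnit : (IsAddUnit.addSubmonoid P).IsFace := fun _ _ h =>
  ⟨isAddUnit_of_add_isAddUnit_left h, isAddUnit_of_add_isAddUnit_right h⟩

end AddSubmonoid

lemma AddSubgroup.mem_closure_addSubmonoid_iff {G : Type*} [AddCommGroup G]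
    (M : AddSubmonoid G) {g : G} :
    g ∈ AddSubgroup.closure (M : Set G) ↔ ∃ a ∈ M, ∃ b ∈ M, g = a - b := by
  refine ⟨fun hg => ?_, ?_⟩
  · induction hg using AddSubgroup.closure_induction with
    | mem x hx => exact ⟨x, hx, 0, M.zero_mem, (sub_zero x).symm⟩
    | zero => exact ⟨0, M.zero_mem, 0, M.zero_mem, (sub_zero 0).symm⟩
    | add x y _ _ hx hy =>
      obtain ⟨a, ha, b, hb, rfl⟩ := hx
      obtain ⟨c, hc, d, hd, rfl⟩ := hy
      exact ⟨a + c, M.add_mem ha hc, b + d, M.add_mem hb hd, by abel⟩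
    | neg x _ hx =>
      obtain ⟨a, ha, b, hb, rfl⟩ := hx
      exact ⟨b, hb, a, ha, neg_sub a b⟩
  · rintro ⟨a, ha, b, hb, rfl⟩
    exact sub_mem (subset_closure ha) (subset_closure hb)

lemma QuotientAddGroup.isAddTorsionFree_of_nsmulSaturated {G : Type*} [AddCommGroup G]
    (H : AddSubgroup G) (hH : H.NSMulSaturated) : IsAddTorsionFree (G ⧸ H) where
  nsmul_right_injective n hn x y hxy := by
    induction x using QuotientAddGroup.induction_on with | H a => ?_
    induction y using QuotientAddGroup.induction_on with | H b => ?_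
    dsimp only at hxy
    rw [← QuotientAddGroup.mk_nsmul, ← QuotientAddGroup.mk_nsmul, QuotientAddGroup.eq, ← smul_neg,
      ← smul_add] at hxy
    exact QuotientAddGroup.eq.mpr ((hH hxy).resolve_left hn)

lemma AddGroup.fg_of_forall_eq_sub {P G : Type*} [AddCommMonoid P] [AddMonoid.FG P]
    [AddCommGroup G] (ι : P →+ G) (h : ∀ g : G, ∃ a b : P, g = ι a - ι b) : AddGroup.FG G := by
  rw [AddGroup.fg_iff_addMonoid_fg]
  refine AddMonoid.fg_of_surjective
    (ι.comp (AddMonoidHom.fst P P) - ι.comp (AddMonoidHom.snd P P)) fun g => ?_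
  obtain ⟨a, b, rfl⟩ := h g
  exact ⟨(a, b), rfl⟩

lemma AddMonoidHom.exists_comp_eq_id_of_surjective {G Q : Type*} [AddCommGroup G]
    [AddCommGroup Q] [Module.Projective ℤ Q] (f : G →+ Q) (hf : Function.Surjective f) :
    ∃ s : Q →+ G, f.comp s = AddMonoidHom.id Q := by
  obtain ⟨s, hs⟩ := Module.projective_lifting_property f.toIntLinearMap LinearMap.id hf
  exact ⟨s.toAddMonoidHom, AddMonoidHom.ext (LinearMap.congr_fun hs)⟩

namespace AddSubmonoid.IsFace

variable {P G : Type*} [AddCommMonoid P] [AddCommGroup G] (ι : P →+ G) {F : AddSubmonoid P}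

lemma nsmulSaturated_closure_image (hι_inj : Function.Injective ι)
    (hsat : (AddMonoidHom.mrange ι).NSMulSaturated) (hF : F.IsFace) :
    (AddSubgroup.closure ((ι : P → G) '' (F : Set P))).NSMulSaturated := by
  intro n g hg
  obtain rfl | hn := eq_or_ne n 0
  · exact Or.inl rfl
  refine Or.inr ?_
  rw [AddSubgroup.mem_toAddSubmonoid, ← AddSubmonoid.coe_map,
    AddSubgroup.mem_closure_addSubmonoid_iff] at hg ⊢
  obtain ⟨_, ⟨a, ha, rfl⟩, _, ⟨b, hb, rfl⟩, hab⟩ := hg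
  obtain ⟨m, rfl⟩ := Nat.exists_eq_succ_of_ne_zero hn
  have hmul : (m + 1) • (g + ι b) = ι (a + m • b) := by
    rw [smul_add, hab, map_add, map_nsmul, succ_nsmul]
    abel
  obtain ⟨p, hp⟩ := (hsat (g := g + ι b) ⟨_, hmul.symm⟩).resolve_left hn
  have hpF : p ∈ F := by
    refine hF.mem_of_nsmul_mem hn ?_
    rw [hι_inj (by rw [map_nsmul, hp, hmul] : ι ((m + 1) • p) = ι (a + m • b))]
    exact F.add_mem ha (F.nsmul_mem hb m)
  exact ⟨ι p, ⟨p, hpF, rfl⟩, ι b, ⟨b, hb, rfl⟩, by rw [hp]; abel⟩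

lemma free_quotient_closure_image [AddGroup.FG G] (hι_inj : Function.Injective ι)
    (hsat : (AddMonoidHom.mrange ι).NSMulSaturated) (hF : F.IsFace) :
    Module.Free ℤ (G ⧸ AddSubgroup.closure ((ι : P → G) '' (F : Set P))) :=
  have := QuotientAddGroup.isAddTorsionFree_of_nsmulSaturated _
    (hF.nsmulSaturated_closure_image ι hι_inj hsat)
  Module.free_of_finite_type_torsion_free'

end AddSubmonoid.IsFace

theorem quotient_by_face_free
    (P : Type) [AddCancelCommMonoid P] [AddMonoid.FG P]
    (G : Type) [AddCommGroup G] (ι : P →+ G)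
    (hι_inj : Function.Injective ι)
    (hι_diff : ∀ g : G, ∃ a b : P, g = ι a - ι b)
    (hsat : ∀ (g : G) (n : ℕ), 1 ≤ n → n • g ∈ Set.range ι → g ∈ Set.range ι) :
    (∀ F : AddSubmonoid P, (∀ x y : P, x + y ∈ F → x ∈ F ∧ y ∈ F) →
      Module.Free ℤ (G ⧸ AddSubgroup.closure ((ι : P → G) '' (F : Set P))) ∧
      ∃ s : (G ⧸ AddSubgroup.closure ((ι : P → G) '' (F : Set P))) →+ G,
        (QuotientAddGroup.mk'
            (AddSubgroup.closure ((ι : P → G) '' (F : Set P)))).comp s =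
          AddMonoidHom.id _) ∧
    Module.Free ℤ (G ⧸ AddSubgroup.closure ((ι : P → G) '' {p : P | IsAddUnit p})) := by
  have : AddGroup.FG G := AddGroup.fg_of_forall_eq_sub ι hι_diff
  have hsat' : (AddMonoidHom.mrange ι).NSMulSaturated := fun n g hg =>
    (eq_or_ne n 0).imp_right fun hn => hsat g n (Nat.one_le_iff_ne_zero.mpr hn) hg
  have hfree (F : AddSubmonoid P) (hF : F.IsFace) :
      Module.Free ℤ (G ⧸ AddSubgroup.closure ((ι : P → G) '' (F : Set P))) :=
    hF.free_quotient_closure_image ι hι_inj hsat'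
  refine ⟨fun F hF => ⟨hfree F hF, ?_⟩,
    hfree (IsAddUnit.addSubmonoid P) (AddSubmonoid.isFace_isAddUnit P)⟩
  have := hfree F hF
  exact (QuotientAddGroup.mk' _).exists_comp_eq_id_of_surjective
    (QuotientAddGroup.mk'_surjective _)
end

section
/- Let P be an integral commutative monoid with Grothendieck group ι : P → G (so ι is an injective monoid homomorphism into an abelian group G such that every element of G has the form ι(a) − ι(b) with a, b ∈ P). Let U = ι(P^×) ⊆ G, let Ḡ = G/U, and let π : G → Ḡ be the quotient homomorphism. Then: (i) every group homomorphism σ : Ḡ → G with π ∘ σ = id maps the submonoid π(ι(P)) ⊆ Ḡ into ι(P); and (ii) the restriction map σ ↦ σ|_{π(ι(P))} is a bijection between the set of group homomorphisms σ : Ḡ → G with π ∘ σ = id and the set of monoid homomorphisms ε : π(ι(P)) → ι(P) satisfying π(ε(m)) = m for all m ∈ π(ι(P)). -/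
/-!
A section `σ` of `π` satisfies `σ (π (ι p)) ≡ ι p` modulo `ι(P^×)`, so `σ (π (ι p)) = ι (u + p)`
for a unit `u`. Every element of `Ḡ` is a difference of elements of `M = π(ι(P))`, so `Ḡ` is the
Grothendieck group of `M`, i.e. the inclusion `M → Ḡ` is a localization of `M` at all of `M`.
Its universal property extends `ε` uniquely to `σ : Ḡ →+ G`, and `π ∘ σ = id` because both
sides restrict to the inclusion on `M`.
-/

/-- The image `ι(P^×)` of the invertible elements, as a subgroup of `G`. -/
def addUnitsImage {P G : Type*} [AddCommMonoid P] [AddCommGroup G] (ι : P →+ G) :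
    AddSubgroup G where
  carrier := ι '' {p : P | IsAddUnit p}
  zero_mem' := ⟨0, isAddUnit_zero, map_zero ι⟩
  add_mem' := by
    rintro a b ⟨p, hp, rfl⟩ ⟨q, hq, rfl⟩
    exact ⟨p + q, hp.add hq, map_add ι p q⟩
  neg_mem' := by
    rintro a ⟨p, hp, rfl⟩
    obtain ⟨u, rfl⟩ := hp
    refine ⟨((-u : AddUnits P) : P), (-u).isAddUnit, ?_⟩
    have h : ι ((u : P)) + ι (((-u : AddUnits P)) : P) = 0 := by
      rw [← map_add]
      simp
    exact (neg_eq_of_add_eq_zero_right h).symm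

def AddSubmonoid.subtypeLocalizationMap {H : Type*} [AddCommGroup H] (M : AddSubmonoid H)
    (hM : ∀ h : H, ∃ a b : M, h = a - b) :
    (⊤ : AddSubmonoid M).LocalizationMap H :=
  M.subtype.toLocalizationMap (fun _ => AddGroup.isAddUnit _)
    (fun h => by
      obtain ⟨a, b, rfl⟩ := hM h
      exact ⟨(a, ⟨b, trivial⟩), sub_add_cancel _ _⟩)
    (fun _ _ h => ⟨0, by rw [Subtype.ext h]⟩)

theorem AddMonoidHom.exists_eq_sub_mrange_comp {P G K : Type*} [AddCommMonoid P] [AddCommGroup G]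
    [AddCommGroup K] {ι : P →+ G} {φ : G →+ K} (hφ : Function.Surjective φ)
    (hι : ∀ g : G, ∃ a b : P, g = ι a - ι b) (k : K) :
    ∃ a b : AddMonoidHom.mrange (φ.comp ι), k = a - b := by
  obtain ⟨g, rfl⟩ := hφ k
  obtain ⟨a, b, rfl⟩ := hι g
  exact ⟨⟨_, a, rfl⟩, ⟨_, b, rfl⟩, map_sub φ _ _⟩

theorem mem_range_of_mk_eq_mk {P G : Type*} [AddCommMonoid P] [AddCommGroup G] (ι : P →+ G)
    {g : G} {p : P} (h : (g : G ⧸ addUnitsImage ι) = ι p) : g ∈ Set.range ι := by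
  obtain ⟨q, -, hq⟩ : g - ι p ∈ addUnitsImage ι := QuotientAddGroup.eq_iff_sub_mem.mp h
  exact ⟨q + p, by rw [map_add, hq, sub_add_cancel]⟩

theorem splittings_bijection_general
    (P : Type) [AddCancelCommMonoid P]
    (G : Type) [AddCommGroup G] (ι : P →+ G)
    (hι_diff : ∀ g : G, ∃ a b : P, g = ι a - ι b) :
    -- (i): any section of the quotient map sends the image of `P` into the image of `P`
    (∀ σ : (G ⧸ addUnitsImage ι) →+ G,
      (QuotientAddGroup.mk' (addUnitsImage ι)).comp σ = AddMonoidHom.id _ →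
      ∀ p : P, σ (QuotientAddGroup.mk' (addUnitsImage ι) (ι p)) ∈ Set.range ι) ∧
    -- (ii): restriction to `π(ι(P))` is a bijection onto monoid splittings:
    -- every monoid splitting `ε` extends to a unique group section `σ`
    (∀ ε : (AddMonoidHom.mrange
          ((QuotientAddGroup.mk' (addUnitsImage ι)).comp ι)) →+ G,
      (∀ m, ε m ∈ AddMonoidHom.mrange ι) →
      (∀ m, QuotientAddGroup.mk' (addUnitsImage ι) (ε m) = (m : G ⧸ addUnitsImage ι)) →
      ∃! σ : (G ⧸ addUnitsImage ι) →+ G,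
        (QuotientAddGroup.mk' (addUnitsImage ι)).comp σ = AddMonoidHom.id _ ∧
        ∀ m : AddMonoidHom.mrange
            ((QuotientAddGroup.mk' (addUnitsImage ι)).comp ι),
          σ (m : G ⧸ addUnitsImage ι) = ε m) := by
  refine ⟨fun σ hσ p => mem_range_of_mk_eq_mk ι (DFunLike.congr_fun hσ _), fun ε _ hε => ?_⟩
  let L := AddSubmonoid.subtypeLocalizationMap _ <|
    AddMonoidHom.exists_eq_sub_mrange_comp
      (QuotientAddGroup.mk'_surjective (addUnitsImage ι)) hι_diff
  have hε_unit (m : (⊤ : AddSubmonoid _)) : IsAddUnit (ε m.1) := AddGroup.isAddUnit _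
  refine ⟨L.lift hε_unit, ⟨L.epic_of_localizationMap ?_, L.lift_eq hε_unit⟩,
    fun τ hτ => (L.lift_unique hε_unit hτ.2).symm⟩
  ext m
  exact (congrArg _ (L.lift_eq hε_unit m)).trans (hε m)

theorem splittings_bijection
    (P : Type) [AddCancelCommMonoid P]
    (G : Type) [AddCommGroup G] (ι : P →+ G)
    (hι_inj : Function.Injective ι)
    (hι_diff : ∀ g : G, ∃ a b : P, g = ι a - ι b) :
    -- (i): any section of the quotient map sends the image of `P` into the image of `P`
    (∀ σ : (G ⧸ addUnitsImage ι) →+ G,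
      (QuotientAddGroup.mk' (addUnitsImage ι)).comp σ = AddMonoidHom.id _ →
      ∀ p : P, σ (QuotientAddGroup.mk' (addUnitsImage ι) (ι p)) ∈ Set.range ι) ∧
    -- (ii): restriction to `π(ι(P))` is a bijection onto monoid splittings:
    -- every monoid splitting `ε` extends to a unique group section `σ`
    (∀ ε : (AddMonoidHom.mrange
          ((QuotientAddGroup.mk' (addUnitsImage ι)).comp ι)) →+ G,
      (∀ m, ε m ∈ AddMonoidHom.mrange ι) →
      (∀ m, QuotientAddGroup.mk' (addUnitsImage ι) (ε m) = (m : G ⧸ addUnitsImage ι)) →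
      ∃! σ : (G ⧸ addUnitsImage ι) →+ G,
        (QuotientAddGroup.mk' (addUnitsImage ι)).comp σ = AddMonoidHom.id _ ∧
        ∀ m : AddMonoidHom.mrange
            ((QuotientAddGroup.mk' (addUnitsImage ι)).comp ι),
          σ (m : G ⧸ addUnitsImage ι) = ε m) :=
  splittings_bijection_general P G ι hι_diff
end

section
/- Let τ : ℂ → ℂ be a function satisfying τ(z + n) = τ(z) for all z ∈ ℂ and n ∈ ℤ, and τ(z) − z ∈ ℤ for all z ∈ ℂ (so τ induces a section of the projection ℂ → ℂ/ℤ), and set Σ = {z ∈ ℂ : z − τ(z) ∈ ℕ}. Let P be an integral commutative monoid, G an abelian group, ι : P → G an injective monoid homomorphism, and r ≥ 0. Set Q = P × ℕ^r and Q′ = P × ℤ^r, and let j : Q′ → G × ℂ^r be the injective monoid homomorphism j(p, m) = (ι(p), m) (viewing ℤ^r ⊆ ℂ^r). Let V′ be a module over the monoid algebra ℂ[Q′] equipped with a (G × ℂ^r)-grading, i.e. a family (V′_h)_{h ∈ G×ℂ^r} of ℂ-subspaces whose internal direct sum is V′ and such that x^{q′} · V′_h ⊆ V′_{j(q′)+h}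 for all q′ ∈ Q′. Suppose v′_1, …, v′_s are homogeneous elements, with v′_i of degree (η_i, λ′_{i,1}, …, λ′_{i,r}), that generate V′ as a ℂ[Q′]-module. Define V = ⊕ V′_{(g,λ)}, the sum over those (g, λ) ∈ G × ℂ^r with λ ∈ Σ^r. Then V is a ℂ[Q]-submodule of V′, and V is generated as a ℂ[Q]-module by the s elements v_i = x^{(0, m_i)} · v′_i, where m_i ∈ ℤ^r has components m_{i,t} = τ(λ′_{i,t}) − λ′_{i,t}; moreover each v_i is homogeneous of degree (η_i, τ(λ′_{i,1}), …, τ(λ′_{i,r})), whose last r coordinates lie in the image of τ. -/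
/-!
Multiplying `v′_i` by `x^{(0, m_i)}` moves its degree from `λ′_i` to `τ(λ′_i)`, which lies in
`Σ^r` because `τ` is constant on `z + ℤ`. Since `Σ + ℕ ⊆ Σ`, the monomials of `ℂ[Q]` preserve `V`.
Conversely, by the independence of the graded pieces, an element of `V′` of degree `h` is a
`ℂ`-combination of the products `x^{q′} · v′_i` of degree exactly `h`. When the last `r`
coordinates of `h` lie in `Σ`, the `t`-th entry of `q′ - (0, m_i)` equals `h_t - τ(h_t) ∈ ℕ`,
so `x^{q′} · v′_i = x^q · v_i` with `q ∈ Q`.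
-/

open AddMonoidAlgebra

/-- The inclusion of monoids `P × ℕ^r → P × ℤ^r`. -/
def prodNatToInt (P : Type*) [AddCommMonoid P] (r : ℕ) :
    P × (Fin r → ℕ) →+ P × (Fin r → ℤ) where
  toFun x := (x.1, fun i => (x.2 i : ℤ))
  map_zero' := by
    refine Prod.ext rfl ?_
    funext i; simp
  map_add' x y := by
    refine Prod.ext rfl ?_
    funext i; simp

/-- The injective monoid homomorphism `j : P × ℤ^r → G × ℂ^r`, `j(p, m) = (ι p, m)`. -/
def gradingHom {P G : Type*} [AddCommMonoid P] [AddCommGroup G] (ι : P →+ G) (r : ℕ) :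
    P × (Fin r → ℤ) →+ G × (Fin r → ℂ) where
  toFun x := (ι x.1, fun i => (x.2 i : ℂ))
  map_zero' := by
    refine Prod.ext (map_zero ι) ?_
    funext i; simp
  map_add' x y := by
    refine Prod.ext (map_add ι _ _) ?_
    funext i; simp

/-- `Σ = {z ∈ ℂ : z − τ(z) ∈ ℕ}`. -/
def sigmaSet (τ : ℂ → ℂ) : Set ℂ := {z : ℂ | ∃ n : ℕ, z - τ z = (n : ℂ)}

/-- The subspace `V = ⊕ V′_{(g,λ)}`, the sum over those `(g, λ)` with `λ ∈ Σ^r`. -/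
def sigmaPart (τ : ℂ → ℂ) {G : Type*} {r : ℕ} {V' : Type*} [AddCommGroup V']
    [Module ℂ V'] (Vh : G × (Fin r → ℂ) → Submodule ℂ V') : Submodule ℂ V' :=
  ⨆ (h : G × (Fin r → ℂ)) (_ : ∀ t, h.2 t ∈ sigmaSet τ), Vh h

namespace AddMonoidAlgebra

theorem span_range_of' {k N : Type*} [Semiring k] [AddZeroClass N] :
    Submodule.span k (Set.range (of' k N)) = ⊤ :=
  eq_top_iff.2 fun a _ =>
    Submodule.span_mono (Set.image_subset_range _ _) (mem_span_support_coeff a)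

variable {k M N V : Type*} [CommSemiring k] [AddCommMonoid M] [AddCommMonoid N]
  [AddCommMonoid V] [Module k[N] V]

theorem of'_smul_of'_smul (x y : N) (v : V) : of' k N x • of' k N y • v = of' k N (x + y) • v := by
  rw [← mul_smul, of'_apply, of'_apply, of'_apply, single_mul_single, one_mul]

variable [Module k V] [IsScalarTower k k[N] V]

theorem single_smul_eq_smul_of'_smul (n : N) (c : k) (v : V) :
    single n c • v = c • of' k N n • v := by
  rw [← smul_assoc, of'_apply, smul_single', mul_one]

theorem span_range_of'_smul_eq_top {ι : Type*} {w : ι → V}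
    (hw : Submodule.span k[N] (Set.range w) = ⊤) :
    Submodule.span k (Set.range fun x : N × ι => of' k N x.1 • w x.2) = ⊤ := by
  rw [← Set.range_smul_range, Submodule.span_smul_of_span_eq_top span_range_of', hw,
    Submodule.restrictScalars_top]

theorem exists_eq_sum_mapDomain_smul_of_mem_span {ι : Type*} [Fintype ι] (f : M →+ N) (w : ι → V)
    {v : V} (hv : v ∈ Submodule.span k (Set.range fun x : M × ι => of' k N (f x.1) • w x.2)) :
    ∃ c : ι → k[M], v = ∑ i, mapDomainRingHom k f (c i) • w i := by
  classical
  let F : (ι → k[M]) →ₗ[k] V := (Fintype.linearCombination k[N] w).restrictScalars k ∘ₗ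
    (mapDomainAlgHom k k f).toLinearMap.compLeft ι
  suffices Submodule.span k _ ≤ LinearMap.range F by
    obtain ⟨c, hc⟩ := this hv
    exact ⟨c, hc ▸ Fintype.linearCombination_apply _ _ _⟩
  rw [Submodule.span_le]
  rintro _ ⟨⟨m, i⟩, rfl⟩
  refine ⟨Pi.single i (of' k M m), ?_⟩
  have : (mapDomainAlgHom k k f).toLinearMap.compLeft ι (Pi.single i (of' k M m)) =
      Pi.single i (of' k N (f m)) := by
    ext1 j; rcases eq_or_ne j i with rfl | h <;> simp [LinearMap.compLeft, *]
  simp only [F, LinearMap.comp_apply, LinearMap.restrictScalars_apply, this,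
    Fintype.linearCombination_apply_single]

end AddMonoidAlgebra

theorem iSupIndep.mem_span_image_of_mem_span {R V H κ : Type*} [Ring R] [AddCommGroup V]
    [Module R V] {Vh : H → Submodule R V} (hind : iSupIndep Vh) {w : κ → V} {d : κ → H}
    (hw : ∀ k, w k ∈ Vh (d k)) {h : H} {v : V} (hv : v ∈ Submodule.span R (Set.range w))
    (hvh : v ∈ Vh h) : v ∈ Submodule.span R (w '' {k | d k = h}) := by
  classical
  obtain ⟨c, rfl⟩ := Finsupp.mem_span_range_iff_exists_finsupp.mp hv
  set u := ∑ k ∈ c.support with d k = h, c k • w k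
  set u' := ∑ k ∈ c.support with d k ≠ h, c k • w k
  have hsplit : c.sum (fun k a => a • w k) = u + u' :=
    (Finset.sum_filter_add_sum_filter_not ..).symm
  have hu_mem : u ∈ Vh h :=
    Submodule.sum_mem _ fun k hk => Submodule.smul_mem _ _ ((Finset.mem_filter.1 hk).2 ▸ hw k)
  have hu'_mem : u' ∈ Vh h := by
    simpa [hsplit] using Submodule.sub_mem _ hvh hu_mem
  have hu'_mem_other : u' ∈ ⨆ j ≠ h, Vh j :=
    Submodule.sum_mem _ fun k hk => Submodule.smul_mem _ _ <|
      Submodule.mem_iSup_of_mem (d k) (Submodule.mem_iSup_of_mem (Finset.mem_filter.1 hk).2 (hw k))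
  have hu' : u' = 0 := Submodule.disjoint_def.1 (hind h) u' hu'_mem hu'_mem_other
  rw [hsplit, hu', add_zero]
  exact Submodule.sum_mem _ fun k hk =>
    Submodule.smul_mem _ _ (Submodule.subset_span ⟨k, (Finset.mem_filter.1 hk).2, rfl⟩)

section SigmaSet

variable {τ : ℂ → ℂ}

theorem natCast_add_mem_sigmaSet (hτ_per : ∀ (z : ℂ) (n : ℤ), τ (z + n) = τ z) {z : ℂ}
    (hz : z ∈ sigmaSet τ) (n : ℕ) : (n : ℂ) + z ∈ sigmaSet τ := by
  obtain ⟨k, hk⟩ := hz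
  refine ⟨n + k, ?_⟩
  have := hτ_per z n
  push_cast at this ⊢
  rw [add_comm, this]
  linear_combination hk

theorem apply_mem_sigmaSet (hτ_per : ∀ (z : ℂ) (n : ℤ), τ (z + n) = τ z)
    (hτ_int : ∀ z : ℂ, ∃ n : ℤ, τ z - z = n) (z : ℂ) : τ z ∈ sigmaSet τ := by
  obtain ⟨n, hn⟩ := hτ_int z
  refine ⟨0, ?_⟩
  have hfix := hτ_per z n
  rw [show z + n = τ z by linear_combination -hn] at hfix
  simp [hfix]

theorem exists_natCast_add_of_intCast_add_mem_sigmaSet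
    (hτ_per : ∀ (z : ℂ) (n : ℤ), τ (z + n) = τ z) {z : ℂ} {k m : ℤ} (hm : (m : ℂ) = τ z - z)
    (hz : (k : ℂ) + z ∈ sigmaSet τ) : ∃ n : ℕ, k = n + m := by
  obtain ⟨n, hn⟩ := hz
  refine ⟨n, ?_⟩
  rw [add_comm, hτ_per] at hn
  exact_mod_cast (by linear_combination hn - hm : (k : ℂ) = n + m)

end SigmaSet

section SigmaPart

variable {τ : ℂ → ℂ} {P G V' : Type*} {r : ℕ} [AddCommGroup V'] [Module ℂ V']
  {Vh : G × (Fin r → ℂ) → Submodule ℂ V'}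

theorem mem_sigmaPart_of_mem {h : G × (Fin r → ℂ)} (hh : ∀ t, h.2 t ∈ sigmaSet τ) {v : V'}
    (hv : v ∈ Vh h) : v ∈ sigmaPart τ Vh :=
  Submodule.mem_iSup_of_mem h (Submodule.mem_iSup_of_mem hh hv)

variable [AddCommMonoid P] [AddCommGroup G] {ι : P →+ G} [Module ℂ[P × (Fin r → ℤ)] V']
  [IsScalarTower ℂ ℂ[P × (Fin r → ℤ)] V']

def IsGradedSMul (ι : P →+ G) (Vh : G × (Fin r → ℂ) → Submodule ℂ V') : Prop :=
  ∀ (q' : P × (Fin r → ℤ)) (h : G × (Fin r → ℂ)), ∀ v ∈ Vh h,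
    of' ℂ (P × (Fin r → ℤ)) q' • v ∈ Vh (gradingHom ι r q' + h)

theorem of'_prodNatToInt_smul_mem_sigmaPart (hτ_per : ∀ (z : ℂ) (n : ℤ), τ (z + n) = τ z)
    (hgrade : IsGradedSMul ι Vh) (q : P × (Fin r → ℕ)) {v : V'} (hv : v ∈ sigmaPart τ Vh) :
    of' ℂ (P × (Fin r → ℤ)) (prodNatToInt P r q) • v ∈ sigmaPart τ Vh := by
  let L := DistribSMul.toLinearMap ℂ V' (of' ℂ (P × (Fin r → ℤ)) (prodNatToInt P r q))
  suffices sigmaPart τ Vh ≤ (sigmaPart τ Vh).comap L from this hv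
  refine iSup₂_le fun h hh u hu => mem_sigmaPart_of_mem (fun t => ?_) (hgrade _ h u hu)
  simpa [gradingHom, prodNatToInt] using natCast_add_mem_sigmaSet hτ_per (hh t) (q.2 t)

theorem mapDomain_smul_mem_sigmaPart (hτ_per : ∀ (z : ℂ) (n : ℤ), τ (z + n) = τ z)
    (hgrade : IsGradedSMul ι Vh) (a : ℂ[P × (Fin r → ℕ)]) {v : V'} (hv : v ∈ sigmaPart τ Vh) :
    mapDomainRingHom ℂ (prodNatToInt P r) a • v ∈ sigmaPart τ Vh := by
  induction a using AddMonoidAlgebra.induction_linear with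
  | zero => simp
  | add a b ha hb => rw [map_add, add_smul]; exact add_mem ha hb
  | single q c =>
    rw [mapDomainRingHom_apply, mapDomain_single, single_smul_eq_smul_of'_smul]
    exact Submodule.smul_mem _ _ (of'_prodNatToInt_smul_mem_sigmaPart hτ_per hgrade q hv)

theorem exists_eq_prodNatToInt_add (hτ_per : ∀ (z : ℂ) (n : ℤ), τ (z + n) = τ z)
    {q' : P × (Fin r → ℤ)} {g : G} {lam : Fin r → ℂ}
    (hh : ∀ t, (gradingHom ι r q' + (g, lam)).2 t ∈ sigmaSet τ) {m : Fin r → ℤ}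
    (hm : ∀ t, (m t : ℂ) = τ (lam t) - lam t) : ∃ q, q' = prodNatToInt P r q + (0, m) := by
  choose n hn using fun t =>
    exists_natCast_add_of_intCast_add_mem_sigmaSet (k := q'.2 t) hτ_per (hm t) (hh t)
  exact ⟨(q'.1, n), Prod.ext (add_zero _).symm (funext fun t => by simp [prodNatToInt, hn t])⟩

theorem mem_span_of'_smul_of_mem_sigmaPart (hτ_per : ∀ (z : ℂ) (n : ℤ), τ (z + n) = τ z)
    (hindep : iSupIndep Vh) (hgrade : IsGradedSMul ι Vh) {κ : Type*} {v' : κ → V'}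
    {η : κ → G} {lam : κ → Fin r → ℂ} (hv'_hom : ∀ i, v' i ∈ Vh (η i, lam i))
    (hv'_gen : Submodule.span ℂ[P × (Fin r → ℤ)] (Set.range v') = ⊤) {m : κ → Fin r → ℤ}
    (hm : ∀ i t, (m i t : ℂ) = τ (lam i t) - lam i t) {v : V'} (hv : v ∈ sigmaPart τ Vh) :
    v ∈ Submodule.span ℂ (Set.range fun x : (P × (Fin r → ℕ)) × κ =>
      of' ℂ (P × (Fin r → ℤ)) (prodNatToInt P r x.1) •
        of' ℂ (P × (Fin r → ℤ)) (0, m x.2) • v' x.2) := by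
  suffices sigmaPart τ Vh ≤ Submodule.span ℂ _ from this hv
  refine iSup₂_le fun h hh u hu => ?_
  have hu_span : u ∈ Submodule.span ℂ
      (Set.range fun x : (P × (Fin r → ℤ)) × κ => of' ℂ (P × (Fin r → ℤ)) x.1 • v' x.2) := by
    rw [span_range_of'_smul_eq_top hv'_gen]
    trivial
  have hu_deg := hindep.mem_span_image_of_mem_span
    (w := fun x : (P × (Fin r → ℤ)) × κ => of' ℂ (P × (Fin r → ℤ)) x.1 • v' x.2)
    (d := fun x => gradingHom ι r x.1 + (η x.2, lam x.2))
    (fun x => hgrade x.1 (η x.2, lam x.2) (v' x.2) (hv'_hom x.2)) hu_span hu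
  refine Submodule.span_mono ?_ hu_deg
  rintro _ ⟨⟨q', i⟩, hdeg, rfl⟩
  obtain ⟨q, rfl⟩ := exists_eq_prodNatToInt_add hτ_per (hdeg ▸ hh) (hm i)
  exact ⟨(q, i), of'_smul_of'_smul _ _ _⟩

end SigmaPart

theorem sigma_part_generation_general
    (τ : ℂ → ℂ)
    (hτ_per : ∀ (z : ℂ) (n : ℤ), τ (z + (n : ℂ)) = τ z)
    (hτ_int : ∀ z : ℂ, ∃ n : ℤ, τ z - z = (n : ℂ))
    (P : Type) [AddCancelCommMonoid P]
    (G : Type) [AddCommGroup G] (ι : P →+ G)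
    (r : ℕ)
    (V' : Type) [AddCommGroup V'] [Module ℂ V']
    [Module (AddMonoidAlgebra ℂ (P × (Fin r → ℤ))) V']
    [IsScalarTower ℂ (AddMonoidAlgebra ℂ (P × (Fin r → ℤ))) V']
    (Vh : G × (Fin r → ℂ) → Submodule ℂ V')
    (hindep : iSupIndep Vh)
    (hgrade : ∀ (q' : P × (Fin r → ℤ)) (h : G × (Fin r → ℂ)), ∀ v ∈ Vh h,
      (of' ℂ (P × (Fin r → ℤ)) q') • v ∈ Vh (gradingHom ι r q' + h))
    (s : ℕ) (v' : Fin s → V') (η : Fin s → G) (lam : Fin s → Fin r → ℂ)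
    (hv'_hom : ∀ i, v' i ∈ Vh (η i, lam i))
    (hv'_gen : Submodule.span (AddMonoidAlgebra ℂ (P × (Fin r → ℤ)))
      (Set.range v') = ⊤) :
    -- `V` is a `ℂ[Q]`-submodule of `V′`
    (∀ a : AddMonoidAlgebra ℂ (P × (Fin r → ℕ)), ∀ v ∈ sigmaPart τ Vh,
      (AddMonoidAlgebra.mapDomainRingHom ℂ (prodNatToInt P r) a) • v
        ∈ sigmaPart τ Vh) ∧
    -- and it is generated over `ℂ[Q]` by the elements `v_i = x^{(0, m_i)} · v′_i`
    ∃ m : Fin s → Fin r → ℤ,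
      (∀ i t, ((m i t : ℤ) : ℂ) = τ (lam i t) - lam i t) ∧
      -- each `v_i` lies in `V`
      (∀ i, (of' ℂ (P × (Fin r → ℤ)) (0, m i)) • v' i ∈ sigmaPart τ Vh) ∧
      -- each `v_i` is homogeneous of degree `(η_i, τ(λ′_{i,1}), …, τ(λ′_{i,r}))`
      (∀ i, (of' ℂ (P × (Fin r → ℤ)) (0, m i)) • v' i
          ∈ Vh (η i, fun t => τ (lam i t))) ∧
      -- whose last `r` coordinates lie in the image of `τ`
      (∀ i t, τ (lam i t) ∈ Set.range τ) ∧
      -- the `v_i` generate `V` as a `ℂ[Q]`-module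
      (∀ v ∈ sigmaPart τ Vh, ∃ c : Fin s → AddMonoidAlgebra ℂ (P × (Fin r → ℕ)),
        v = ∑ i, (AddMonoidAlgebra.mapDomainRingHom ℂ (prodNatToInt P r) (c i)) •
          ((of' ℂ (P × (Fin r → ℤ)) (0, m i)) • v' i)) := by
  choose m hm using fun i t => hτ_int (lam i t)
  have hm' : ∀ i t, (m i t : ℂ) = τ (lam i t) - lam i t := fun i t => (hm i t).symm
  have hv_hom : ∀ i,
      of' ℂ (P × (Fin r → ℤ)) (0, m i) • v' i ∈ Vh (η i, fun t => τ (lam i t)) := by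
    intro i
    convert hgrade (0, m i) _ _ (hv'_hom i) using 2
    ext t
    · simp [gradingHom]
    · simp [gradingHom, ← hm i t]
  refine ⟨fun a v hv => mapDomain_smul_mem_sigmaPart hτ_per hgrade a hv, m, hm',
    fun i => mem_sigmaPart_of_mem (fun t => apply_mem_sigmaSet hτ_per hτ_int _) (hv_hom i), hv_hom,
    fun i t => ⟨lam i t, rfl⟩, fun v hv => ?_⟩
  exact exists_eq_sum_mapDomain_smul_of_mem_span _ _ <|
    mem_span_of'_smul_of_mem_sigmaPart hτ_per hindep hgrade hv'_hom hv'_gen hm' hv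

theorem sigma_part_generation
    (τ : ℂ → ℂ)
    (hτ_per : ∀ (z : ℂ) (n : ℤ), τ (z + (n : ℂ)) = τ z)
    (hτ_int : ∀ z : ℂ, ∃ n : ℤ, τ z - z = (n : ℂ))
    (P : Type) [AddCancelCommMonoid P]
    (G : Type) [AddCommGroup G] (ι : P →+ G) (hι_inj : Function.Injective ι)
    (r : ℕ)
    (V' : Type) [AddCommGroup V'] [Module ℂ V']
    [Module (AddMonoidAlgebra ℂ (P × (Fin r → ℤ))) V']
    [IsScalarTower ℂ (AddMonoidAlgebra ℂ (P × (Fin r → ℤ))) V']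
    (Vh : G × (Fin r → ℂ) → Submodule ℂ V')
    (hindep : iSupIndep Vh)
    (hsup : (⨆ h, Vh h) = ⊤)
    (hgrade : ∀ (q' : P × (Fin r → ℤ)) (h : G × (Fin r → ℂ)), ∀ v ∈ Vh h,
      (of' ℂ (P × (Fin r → ℤ)) q') • v ∈ Vh (gradingHom ι r q' + h))
    (s : ℕ) (v' : Fin s → V') (η : Fin s → G) (lam : Fin s → Fin r → ℂ)
    (hv'_hom : ∀ i, v' i ∈ Vh (η i, lam i))
    (hv'_gen : Submodule.span (AddMonoidAlgebra ℂ (P × (Fin r → ℤ)))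
      (Set.range v') = ⊤) :
    -- `V` is a `ℂ[Q]`-submodule of `V′`
    (∀ a : AddMonoidAlgebra ℂ (P × (Fin r → ℕ)), ∀ v ∈ sigmaPart τ Vh,
      (AddMonoidAlgebra.mapDomainRingHom ℂ (prodNatToInt P r) a) • v
        ∈ sigmaPart τ Vh) ∧
    -- and it is generated over `ℂ[Q]` by the elements `v_i = x^{(0, m_i)} · v′_i`
    ∃ m : Fin s → Fin r → ℤ,
      (∀ i t, ((m i t : ℤ) : ℂ) = τ (lam i t) - lam i t) ∧
      -- each `v_i` lies in `V`
      (∀ i, (of' ℂ (P × (Fin r → ℤ)) (0, m i)) • v' i ∈ sigmaPart τ Vh) ∧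
      -- each `v_i` is homogeneous of degree `(η_i, τ(λ′_{i,1}), …, τ(λ′_{i,r}))`
      (∀ i, (of' ℂ (P × (Fin r → ℤ)) (0, m i)) • v' i
          ∈ Vh (η i, fun t => τ (lam i t))) ∧
      -- whose last `r` coordinates lie in the image of `τ`
      (∀ i t, τ (lam i t) ∈ Set.range τ) ∧
      -- the `v_i` generate `V` as a `ℂ[Q]`-module
      (∀ v ∈ sigmaPart τ Vh, ∃ c : Fin s → AddMonoidAlgebra ℂ (P × (Fin r → ℕ)),
        v = ∑ i, (AddMonoidAlgebra.mapDomainRingHom ℂ (prodNatToInt P r) (c i)) •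
          ((of' ℂ (P × (Fin r → ℤ)) (0, m i)) • v' i)) :=
  sigma_part_generation_general τ hτ_per hτ_int P G ι r V' Vh hindep hgrade s v' η lam hv'_hom
    hv'_gen
end
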